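/- Let S ∈ (1/2)ℕ, S ≥ 1/2, q ∈ (0,1), Δ = (q + q⁻¹)/2. The spin-S two-site kink Hamiltonian h_S(Δ) = S²·𝟙⊗𝟙 − S³⊗S³ − Δ⁻¹(S¹⊗S¹ + S²⊗S²) + S√(1 − 1/Δ²)(S³⊗𝟙 − 𝟙⊗S³) is a Hermitian positive semidefinite operator on ℂ^{2S+1}⊗ℂ^{2S+1}. -/

import Mathlib

open Matrix Kronecker ComplexOrder

noncomputable section

/-- The spin value `S = N/2`, where `N = 2S ∈ ℕ`. -/
def Sval (N : ℕ) : ℝ := (N : ℝ) / 2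

/-- The magnetic quantum number `m = S − k` of the basis vector indexed by
`k ∈ {0,…,N}` (so `k = S − m`). -/
def mval (N : ℕ) (k : Fin (N + 1)) : ℝ := Sval N - (k : ℕ)

/-- The spin-S matrix `S³`: diagonal with `S³|m⟩ = m|m⟩`. -/
def S3S (N : ℕ) : Matrix (Fin (N + 1)) (Fin (N + 1)) ℂ :=
  Matrix.diagonal fun k => ((mval N k : ℝ) : ℂ)

/-- The spin-S raising operator `S⁺|m⟩ = √(S(S+1) − m(m+1)) |m+1⟩`. -/
def SplusS (N : ℕ) : Matrix (Fin (N + 1)) (Fin (N + 1)) ℂ :=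
  fun k' k =>
    if (k' : ℕ) + 1 = (k : ℕ) then
      ((Real.sqrt (Sval N * (Sval N + 1) - mval N k * (mval N k + 1)) : ℝ) : ℂ)
    else 0

/-- The spin-S lowering operator `S⁻|m⟩ = √(S(S+1) − m(m−1)) |m−1⟩`. -/
def SminusS (N : ℕ) : Matrix (Fin (N + 1)) (Fin (N + 1)) ℂ :=
  fun k' k =>
    if (k' : ℕ) = (k : ℕ) + 1 then
      ((Real.sqrt (Sval N * (Sval N + 1) - mval N k * (mval N k - 1)) : ℝ) : ℂ)
    else 0

/-- The spin-S matrix `S¹ = (S⁺ + S⁻)/2`. -/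
def S1S (N : ℕ) : Matrix (Fin (N + 1)) (Fin (N + 1)) ℂ :=
  (1 / 2 : ℂ) • (SplusS N + SminusS N)

/-- The spin-S matrix `S² = (S⁺ − S⁻)/(2i)`. -/
def S2S (N : ℕ) : Matrix (Fin (N + 1)) (Fin (N + 1)) ℂ :=
  (1 / (2 * Complex.I)) • (SplusS N - SminusS N)

/-- The anisotropy `Δ = (q + q⁻¹)/2`. -/
def Delta (q : ℝ) : ℝ := (q + q⁻¹) / 2

/-- The spin-S two-site kink Hamiltonian
`h_S(Δ) = S²·𝟙⊗𝟙 − S³⊗S³ − Δ⁻¹(S¹⊗S¹ + S²⊗S²) + S√(1 − 1/Δ²)(S³⊗𝟙 − 𝟙⊗S³)`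
on `ℂ^{2S+1}⊗ℂ^{2S+1}`. -/
def hSpin (N : ℕ) (q : ℝ) :
    Matrix (Fin (N + 1) × Fin (N + 1)) (Fin (N + 1) × Fin (N + 1)) ℂ :=
  ((Sval N : ℂ) ^ 2) • (1 : Matrix (Fin (N + 1) × Fin (N + 1)) (Fin (N + 1) × Fin (N + 1)) ℂ)
    - S3S N ⊗ₖ S3S N - ((Delta q : ℂ))⁻¹ • (S1S N ⊗ₖ S1S N + S2S N ⊗ₖ S2S N)
    + ((Sval N * Real.sqrt (1 - 1 / (Delta q) ^ 2) : ℝ) : ℂ) •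
        (S3S N ⊗ₖ (1 : Matrix (Fin (N + 1)) (Fin (N + 1)) ℂ)
          - (1 : Matrix (Fin (N + 1)) (Fin (N + 1)) ℂ) ⊗ₖ S3S N)

/-!
Writing `S¹⊗S¹ + S²⊗S² = ½(S⁺⊗S⁻ + S⁻⊗S⁺)` shows that `hSpin N q` is a real symmetric matrix
whose off-diagonal entries `-(2Δ)⁻¹ (S⁺⊗S⁻ + S⁻⊗S⁺)` are nonpositive. Such a matrix is positive
semidefinite as soon as it has a kernel vector `ψ` with positive entries: conjugation by `diag ψ`
turns it into a weighted graph Laplacian, whose quadratic form is `½ ∑ wᵢⱼ |xᵢ - xⱼ|²` with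
`wᵢⱼ ≥ 0`. For `0 < q ≤ 1` the product state `ψ(k, l) = q^l √(N choose k) √(N choose l)` is such
a kernel vector.
-/

namespace Matrix

variable {n 𝕜 : Type*} [Fintype n] [RCLike 𝕜]

omit [Fintype n] in
theorem IsSymm.isHermitian_map_algebraMap {A : Matrix n n ℝ} (hA : A.IsSymm) :
    (A.map (algebraMap ℝ 𝕜)).IsHermitian := by
  ext i j
  simp [hA.apply i j]

theorem dotProduct_mulVec_map_algebraMap (A : Matrix n n ℝ) (x : n → 𝕜) :
    star x ⬝ᵥ A.map (algebraMap ℝ 𝕜) *ᵥ x = ∑ i, ∑ j, (A i j : 𝕜) * (star (x i) * x j) := by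
  simp only [dotProduct, mulVec, Finset.mul_sum, map_apply, Pi.star_apply]
  refine Finset.sum_congr rfl fun i _ => Finset.sum_congr rfl fun j _ => ?_
  simp only [RCLike.algebraMap_eq_ofReal]
  ring

theorem IsSymm.dotProduct_mulVec_map_eq_sum_sq {A : Matrix n n ℝ} (hA : A.IsSymm)
    (hrow : A *ᵥ 1 = 0) (x : n → 𝕜) :
    star x ⬝ᵥ A.map (algebraMap ℝ 𝕜) *ᵥ x
      = ∑ i, ∑ j, ((-A i j / 2 : ℝ) : 𝕜) * (star (x i - x j) * (x i - x j)) := by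
  have hrow_sum (i : n) : ∑ j, (A i j : 𝕜) = 0 := by
    simpa [mulVec, dotProduct] using congrArg (fun r : ℝ => (r : 𝕜)) (congrFun hrow i)
  have hdiag : ∑ i, ∑ j, (A i j : 𝕜) * (star (x i) * x i) = 0 := by
    simp [← Finset.sum_mul, hrow_sum]
  have hdiag' : ∑ i, ∑ j, (A i j : 𝕜) * (star (x j) * x j) = 0 := by
    rw [Finset.sum_comm]
    simpa [hA.apply] using hdiag
  have hswap : ∑ i, ∑ j, (A i j : 𝕜) * (star (x j) * x i)
      = ∑ i, ∑ j, (A i j : 𝕜) * (star (x i) * x j) := by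
    rw [Finset.sum_comm]
    simp [hA.apply]
  rw [dotProduct_mulVec_map_algebraMap]
  have hterm (i j : n) : ((-A i j / 2 : ℝ) : 𝕜) * (star (x i - x j) * (x i - x j))
      = ((A i j : 𝕜) * (star (x i) * x j) + (A i j : 𝕜) * (star (x j) * x i)
        - (A i j : 𝕜) * (star (x i) * x i) - (A i j : 𝕜) * (star (x j) * x j)) / 2 := by
    push_cast
    simp only [star_sub]
    ring
  simp only [hterm, ← Finset.sum_div, Finset.sum_sub_distrib, Finset.sum_add_distrib]
  rw [hdiag, hdiag', hswap]
  ring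

theorem posSemidef_map_of_offDiag_nonpos_of_mulVec_one_eq_zero {A : Matrix n n ℝ}
    (hA : A.IsSymm) (hoff : ∀ i j, i ≠ j → A i j ≤ 0) (hrow : A *ᵥ 1 = 0) :
    (A.map (algebraMap ℝ 𝕜)).PosSemidef := by
  refine PosSemidef.of_dotProduct_mulVec_nonneg hA.isHermitian_map_algebraMap fun x => ?_
  rw [hA.dotProduct_mulVec_map_eq_sum_sq hrow]
  refine Finset.sum_nonneg fun i _ => Finset.sum_nonneg fun j _ => ?_
  obtain rfl | hij := eq_or_ne i j
  · simp
  · have hw : (0 : ℝ) ≤ -A i j / 2 := by linarith [hoff i j hij]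
    exact mul_nonneg (RCLike.ofReal_nonneg.2 hw) (star_mul_self_nonneg _)

theorem posSemidef_map_of_offDiag_nonpos_of_mulVec_eq_zero [DecidableEq n] {A : Matrix n n ℝ}
    (hA : A.IsSymm) (hoff : ∀ i j, i ≠ j → A i j ≤ 0) {ψ : n → ℝ} (hψ : ∀ i, 0 < ψ i)
    (hker : A *ᵥ ψ = 0) : (A.map (algebraMap ℝ 𝕜)).PosSemidef := by
  set D := diagonal ψ
  set E := diagonal fun i => (ψ i)⁻¹
  have hDAD (i j : n) : (D * A * D) i j = ψ i * A i j * ψ j := by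
    simp [D, diagonal_mul, mul_diagonal]
  have hL : ((D * A * D).map (algebraMap ℝ 𝕜)).PosSemidef := by
    refine posSemidef_map_of_offDiag_nonpos_of_mulVec_one_eq_zero ?_ (fun i j hij => ?_) ?_
    · simp [IsSymm, transpose_mul, hA.eq, D, Matrix.mul_assoc]
    · rw [hDAD]
      exact mul_nonpos_of_nonpos_of_nonneg (mul_nonpos_of_nonneg_of_nonpos (hψ i).le
        (hoff i j hij)) (hψ j).le
    · have hD1 : D *ᵥ 1 = ψ := by ext i; simp [D, mulVec_diagonal]
      rw [← mulVec_mulVec, hD1, ← mulVec_mulVec, hker, mulVec_zero]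
  have hconj : A = E * (D * A * D) * E := by
    ext i j
    simp only [E, diagonal_mul, mul_diagonal, hDAD]
    field_simp [(hψ i).ne', (hψ j).ne']
  have hE : (E.map (algebraMap ℝ 𝕜))ᴴ = E.map (algebraMap ℝ 𝕜) :=
    (isSymm_diagonal _).isHermitian_map_algebraMap.eq
  have := hL.conjTranspose_mul_mul_same (E.map (algebraMap ℝ 𝕜))
  rwa [hE, ← Matrix.map_mul, ← Matrix.map_mul, ← hconj] at this

end Matrix

theorem Matrix.kronecker_mulVec_mul {R l m n p : Type*} [CommSemiring R] [Fintype m] [Fintype p]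
    (A : Matrix l m R) (B : Matrix n p R) (x : m → R) (y : p → R) :
    (A ⊗ₖ B) *ᵥ (fun j => x j.1 * y j.2) = fun i => (A *ᵥ x) i.1 * (B *ᵥ y) i.2 := by
  ext i
  simp only [mulVec, dotProduct, kroneckerMap_apply, Fintype.sum_prod_type, Finset.sum_mul_sum]
  exact Finset.sum_congr rfl fun _ _ => Finset.sum_congr rfl fun _ _ => by ring

theorem Fin.sum_ite_val_eq {R : Type*} [AddCommMonoid R] {n : ℕ} (a : ℕ) (f : Fin n → R) :
    ∑ k : Fin n, (if (k : ℕ) = a then f k else 0) = if h : a < n then f ⟨a, h⟩ else 0 := by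
  split_ifs with h
  · rw [Finset.sum_eq_single ⟨a, h⟩ (fun k _ hk => if_neg fun hka => hk (Fin.ext hka))
      (fun h' => absurd (Finset.mem_univ _) h'), if_pos rfl]
  · exact Finset.sum_eq_zero fun k _ => if_neg fun (hka : (k : ℕ) = a) => h (hka ▸ k.isLt)

theorem Real.sqrt_mul_mul_sqrt_of_mul_eq {x y u w : ℝ} (hx : 0 ≤ x) (hy : 0 ≤ y)
    (h : y * u = x * w) : √(x * y) * √u = x * √w := by
  rw [← Real.sqrt_mul (mul_nonneg hx hy), mul_assoc, h, ← mul_assoc,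
    Real.sqrt_mul (mul_self_nonneg x), Real.sqrt_mul_self hx]

theorem Nat.cast_succ_mul_choose_succ (N a : ℕ) (h : a < N) :
    ((a : ℝ) + 1) * (N.choose (a + 1) : ℝ) = ((N : ℝ) - a) * N.choose a := by
  have := Nat.choose_succ_right_eq N a
  rw [← Nat.cast_sub h.le, mul_comm ((a : ℝ) + 1), mul_comm ((N - a : ℕ) : ℝ)]
  exact_mod_cast this

theorem Delta_pos {q : ℝ} (hq : 0 < q) : 0 < Delta q := by
  unfold Delta; positivity

theorem inv_Delta {q : ℝ} (hq : 0 < q) : (Delta q)⁻¹ = 2 * q / (1 + q ^ 2) := by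
  unfold Delta; field_simp; ring

theorem sqrt_one_sub_inv_Delta_sq {q : ℝ} (hq0 : 0 < q) (hq1 : q ≤ 1) :
    √(1 - 1 / Delta q ^ 2) = (1 - q ^ 2) / (1 + q ^ 2) := by
  have hnonneg : 0 ≤ (1 - q ^ 2) / (1 + q ^ 2) := div_nonneg (by nlinarith) (by positivity)
  rw [one_div, ← inv_pow, inv_Delta hq0, ← Real.sqrt_sq hnonneg]
  congr 1
  field_simp
  ring

-- `S(S+1) - m(m+1) = k(N+1-k)` for the column index `k`, where `m = S - k`.
def spinPlus (N : ℕ) : Matrix (Fin (N + 1)) (Fin (N + 1)) ℝ :=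
  of fun a k => if (a : ℕ) + 1 = k then √(((k : ℕ) : ℝ) * (N + 1 - (k : ℕ))) else 0

def binomialState (N : ℕ) (t : ℝ) (k : Fin (N + 1)) : ℝ :=
  t ^ (k : ℕ) * √(N.choose k)

theorem spinPlus_nonneg (N : ℕ) (a k : Fin (N + 1)) : 0 ≤ spinPlus N a k := by
  simp only [spinPlus, of_apply]
  split_ifs
  exacts [Real.sqrt_nonneg _, le_rfl]

theorem binomialState_pos (N : ℕ) {t : ℝ} (ht : 0 < t) (k : Fin (N + 1)) :
    0 < binomialState N t k := by
  have : 0 < (N.choose k : ℝ) := by exact_mod_cast Nat.choose_pos (Nat.lt_succ_iff.1 k.isLt)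
  unfold binomialState
  positivity

theorem spinPlus_mulVec_binomialState (N : ℕ) (t : ℝ) (a : Fin (N + 1)) :
    (spinPlus N *ᵥ binomialState N t) a = t * ((N - (a : ℕ)) * binomialState N t a) := by
  simp only [mulVec, dotProduct, spinPlus, of_apply, ite_mul, zero_mul, eq_comm (a := (a : ℕ) + 1)]
  rw [Fin.sum_ite_val_eq]
  split_ifs with h
  · have hchoose := Nat.cast_succ_mul_choose_succ N a (by omega)
    have hNa : (0 : ℝ) ≤ N - (a : ℕ) := by
      rw [sub_nonneg]; exact_mod_cast (Nat.lt_succ_iff.1 a.isLt)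
    simp only [binomialState]
    push_cast
    rw [show ((a : ℕ) + 1 : ℝ) * (N + 1 - ((a : ℕ) + 1)) = (N - (a : ℕ)) * ((a : ℕ) + 1) by ring]
    rw [← mul_assoc, mul_comm _ (t ^ _), mul_assoc,
      Real.sqrt_mul_mul_sqrt_of_mul_eq hNa (by positivity) hchoose]
    ring
  · have ha : (a : ℕ) = N := by omega
    simp [ha]

theorem spinPlus_transpose_mulVec_binomialState (N : ℕ) (t : ℝ) (a : Fin (N + 1)) :
    t * ((spinPlus N)ᵀ *ᵥ binomialState N t) a = (a : ℕ) * binomialState N t a := by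
  obtain ⟨a, ha⟩ := a
  simp only [mulVec, dotProduct, transpose_apply, spinPlus, of_apply, ite_mul, zero_mul]
  cases a with
  | zero => simp
  | succ a =>
    simp only [Nat.add_right_cancel_iff]
    rw [Fin.sum_ite_val_eq, dif_pos (by omega)]
    have hchoose := Nat.cast_succ_mul_choose_succ N a (by omega)
    have hNa : (0 : ℝ) ≤ N - a := by
      rw [sub_nonneg]; exact_mod_cast (by omega : a ≤ N)
    simp only [binomialState]
    push_cast
    rw [show ((a : ℝ) + 1) * (N + 1 - (a + 1)) = ((a : ℝ) + 1) * (N - a) by ring]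
    rw [← mul_assoc _ (t ^ a), mul_comm _ (t ^ a), mul_assoc (t ^ a),
      Real.sqrt_mul_mul_sqrt_of_mul_eq (by positivity) hNa hchoose.symm]
    ring

theorem S1S_kronecker_S1S_add_S2S_kronecker_S2S (N : ℕ) :
    S1S N ⊗ₖ S1S N + S2S N ⊗ₖ S2S N
      = (1 / 2 : ℂ) • (SplusS N ⊗ₖ SminusS N + SminusS N ⊗ₖ SplusS N) := by
  ext i j
  simp only [S1S, S2S, Matrix.add_apply, Matrix.sub_apply, Matrix.smul_apply, kroneckerMap_apply,
    smul_eq_mul]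
  field_simp
  ring_nf
  rw [Complex.I_sq]
  ring

theorem SplusS_eq_map (N : ℕ) : SplusS N = (spinPlus N).map (algebraMap ℝ ℂ) := by
  ext a k
  simp only [SplusS, spinPlus, map_apply, of_apply]
  split_ifs
  · simp only [mval, Sval, Complex.coe_algebraMap]
    congr 3
    ring
  · simp

theorem SminusS_eq_map (N : ℕ) : SminusS N = (spinPlus N)ᵀ.map (algebraMap ℝ ℂ) := by
  ext a k
  simp only [SminusS, spinPlus, map_apply, transpose_apply, of_apply, eq_comm (a := (a : ℕ))]
  split_ifs with h
  · have ha : ((a : ℕ) : ℝ) = (k : ℕ) + 1 := by exact_mod_cast h.symm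
    simp only [mval, Sval, Complex.coe_algebraMap, ha]
    congr 3
    ring
  · simp

def kinkHamiltonianReal (N : ℕ) (q : ℝ) :
    Matrix (Fin (N + 1) × Fin (N + 1)) (Fin (N + 1) × Fin (N + 1)) ℝ :=
  diagonal (fun p => Sval N ^ 2 - mval N p.1 * mval N p.2
      + Sval N * √(1 - 1 / Delta q ^ 2) * (mval N p.1 - mval N p.2))
    - (2 * Delta q)⁻¹ • (spinPlus N ⊗ₖ (spinPlus N)ᵀ + (spinPlus N)ᵀ ⊗ₖ spinPlus N)

theorem hSpin_eq_map (N : ℕ) (q : ℝ) :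
    hSpin N q = (kinkHamiltonianReal N q).map (algebraMap ℝ ℂ) := by
  rw [hSpin, S1S_kronecker_S1S_add_S2S_kronecker_S2S, SplusS_eq_map, SminusS_eq_map]
  ext ⟨a, b⟩ ⟨k, l⟩
  simp only [kinkHamiltonianReal, S3S, Matrix.add_apply, Matrix.sub_apply, Matrix.smul_apply,
    map_apply, kroneckerMap_apply, diagonal_apply, one_apply, Prod.mk.injEq, smul_eq_mul,
    Complex.coe_algebraMap]
  split_ifs <;> first | tauto | (push_cast; ring)

theorem isSymm_kinkHamiltonianReal (N : ℕ) (q : ℝ) : (kinkHamiltonianReal N q).IsSymm := by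
  simp only [IsSymm, kinkHamiltonianReal, transpose_sub, transpose_smul, transpose_add,
    diagonal_transpose, ← kroneckerMap_transpose, transpose_transpose, add_comm]

theorem kinkHamiltonianReal_apply_nonpos {N : ℕ} {q : ℝ} (hq : 0 < q)
    {p p' : Fin (N + 1) × Fin (N + 1)} (h : p ≠ p') : kinkHamiltonianReal N q p p' ≤ 0 := by
  have hΔ := Delta_pos hq
  simp only [kinkHamiltonianReal, Matrix.sub_apply, diagonal_apply_ne _ h, zero_sub, neg_nonpos,
    Matrix.smul_apply, Matrix.add_apply, kroneckerMap_apply, transpose_apply, smul_eq_mul]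
  have hP := spinPlus_nonneg N
  exact mul_nonneg (by positivity)
    (add_nonneg (mul_nonneg (hP _ _) (hP _ _)) (mul_nonneg (hP _ _) (hP _ _)))

theorem kinkHamiltonianReal_mulVec_binomialState {N : ℕ} {q : ℝ} (hq0 : 0 < q) (hq1 : q ≤ 1) :
    kinkHamiltonianReal N q *ᵥ (fun p => binomialState N 1 p.1 * binomialState N q p.2) = 0 := by
  ext ⟨a, b⟩
  rw [kinkHamiltonianReal, sub_mulVec, smul_mulVec, add_mulVec, kronecker_mulVec_mul,
    kronecker_mulVec_mul]
  simp only [Pi.sub_apply, Pi.smul_apply, Pi.add_apply, smul_eq_mul, Pi.zero_apply, mulVec_diagonal]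
  have hPa := spinPlus_mulVec_binomialState N 1 a
  have hPTa := spinPlus_transpose_mulVec_binomialState N 1 a
  have hPb := spinPlus_mulVec_binomialState N q b
  have hPTb := spinPlus_transpose_mulVec_binomialState N q b
  rw [one_mul] at hPTa
  rw [hPa, hPTa, hPb, eq_div_of_mul_eq hq0.ne' ((mul_comm _ _).trans hPTb), mul_inv,
    inv_Delta hq0, sqrt_one_sub_inv_Delta_sq hq0 hq1]
  simp only [Sval, mval]
  field_simp
  ring

theorem hSpin_isHermitian_posSemidef_general (N : ℕ) (q : ℝ)
    (hq0 : 0 < q) (hq1 : q < 1) :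
    (hSpin N q).IsHermitian ∧ (hSpin N q).PosSemidef := by
  have hpsd : (hSpin N q).PosSemidef := by
    rw [hSpin_eq_map]
    exact posSemidef_map_of_offDiag_nonpos_of_mulVec_eq_zero (isSymm_kinkHamiltonianReal N q)
      (fun _ _ => kinkHamiltonianReal_apply_nonpos hq0)
      (fun p => mul_pos (binomialState_pos N one_pos p.1) (binomialState_pos N hq0 p.2))
      (kinkHamiltonianReal_mulVec_binomialState hq0 hq1.le)
  exact ⟨hpsd.isHermitian, hpsd⟩

/-- Let `S ∈ (1/2)ℕ`, `S ≥ 1/2` (i.e. `N = 2S ≥ 1`), `q ∈ (0,1)`,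
`Δ = (q + q⁻¹)/2`. The spin-S two-site kink Hamiltonian `h_S(Δ)` is a Hermitian
positive semidefinite operator on `ℂ^{2S+1}⊗ℂ^{2S+1}`. -/
theorem hSpin_isHermitian_posSemidef (N : ℕ) (hN : 1 ≤ N) (q : ℝ)
    (hq0 : 0 < q) (hq1 : q < 1) :
    (hSpin N q).IsHermitian ∧ (hSpin N q).PosSemidef :=
  hSpin_isHermitian_posSemidef_general N q hq0 hq1
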